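/- arXiv:1611.02527 — 2 statements merged into one kernel-verified Lean document; each statement's English description precedes it below -/
import Mathlib

section
/- Weak König's lemma implies the longest path principle: given that every infinite binary tree has an infinite path, every binary tree T has a longest path, obtained by applying WKL to the tree T' = {a : a ∈ T or ∃ b ∈ T with |b| = ht(T) and a properly extends b}, where ht(T) is the supremum of lengths of elements of T (when T is infinite one takes T' = T). -/
/-!
If `T` has elements of every length, WKL yields a path through `T`, and such a path is trivially
longest. Otherwise prefix-closure bounds all lengths in `T`, so a nonempty `T` has an element `b`
of maximal length; any extension of `b` to an infinite sequence leaves `T` only after passing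
length `|b|`, which already bounds every element of `T`.
-/

def bar (α : ℕ → Bool) (n : ℕ) : List Bool := List.ofFn fun i : Fin n => α i

def IsLongestPath (T : Set (List Bool)) (α : ℕ → Bool) : Prop :=
  ∀ n, bar α n ∉ T → ∀ a ∈ T, a.length < n

lemma isLongestPath_of_forall_bar_mem {T : Set (List Bool)} {α : ℕ → Bool}
    (h : ∀ n, bar α n ∈ T) : IsLongestPath T α :=
  fun n hn => absurd (h n) hn

lemma bar_getD_eq_take (l : List Bool) (d : Bool) {k : ℕ} (hk : k ≤ l.length) :
    bar (fun i => l.getD i d) k = l.take k := by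
  apply List.ext_getElem
  · simp [bar, hk]
  · intro i _ hi
    simp only [bar, List.getElem_ofFn, List.getElem_take]
    exact List.getD_eq_getElem _ _ (by grind)

lemma isLongestPath_of_isLongest {T : Set (List Bool)} (hT : ∀ a ∈ T, ∀ b, b <+: a → b ∈ T)
    {b : List Bool} (hb : b ∈ T) (hmax : ∀ a ∈ T, a.length ≤ b.length) (d : Bool) :
    IsLongestPath T (fun i => b.getD i d) := by
  intro n hn a ha
  by_contra! hna
  rw [bar_getD_eq_take b d (hna.trans (hmax a ha))] at hn
  exact hn (hT b hb _ (List.take_prefix n b))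

lemma length_lt_of_forall_length_ne {β : Type*} {T : Set (List β)}
    (hT : ∀ a ∈ T, ∀ b, b <+: a → b ∈ T) {N : ℕ} (hN : ∀ a ∈ T, a.length ≠ N) :
    ∀ a ∈ T, a.length < N := by
  intro a ha
  by_contra! hNa
  exact hN (a.take N) (hT a ha _ (List.take_prefix N a)) (by simp [hNa])

lemma exists_forall_length_le {β : Type*} {T : Set (List β)} (hne : T.Nonempty) {N : ℕ}
    (hN : ∀ a ∈ T, a.length < N) : ∃ b ∈ T, ∀ a ∈ T, a.length ≤ b.length := by
  have hbdd : BddAbove (List.length '' T) := ⟨N, by rintro _ ⟨a, ha, rfl⟩; exact (hN a ha).le⟩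
  obtain ⟨b, hb, hlen⟩ := Nat.sSup_mem (hne.image _) hbdd
  exact ⟨b, hb, fun a ha => hlen ▸ le_csSup hbdd ⟨a, ha, rfl⟩⟩

theorem wkl_implies_lpp
    (WKL : ∀ T : Set (List Bool),
      (∀ a ∈ T, ∀ b, b <+: a → b ∈ T) →
      (∀ n, ∃ a ∈ T, a.length = n) →
      ∃ α : ℕ → Bool, ∀ n, bar α n ∈ T) :
    ∀ T : Set (List Bool), (∀ a ∈ T, ∀ b, b <+: a → b ∈ T) →
      ∃ α : ℕ → Bool, ∀ n, bar α n ∉ T → ∀ a ∈ T, a.length < n := by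
  intro T hT
  by_cases hinf : ∀ n, ∃ a ∈ T, a.length = n
  · obtain ⟨α, hα⟩ := WKL T hT hinf
    exact ⟨α, isLongestPath_of_forall_bar_mem hα⟩
  push Not at hinf
  obtain ⟨N, hN⟩ := hinf
  rcases T.eq_empty_or_nonempty with rfl | hne
  · exact ⟨fun _ => true, fun _ _ a ha => ha.elim⟩
  obtain ⟨b, hb, hmax⟩ := exists_forall_length_le hne (length_lt_of_forall_length_ne hT hN)
  exact ⟨_, isLongestPath_of_isLongest hT hb hmax true⟩
end

section
/- The longest path principle implies weak König's lemma: if every binary tree has a longest path (α such that whenever ᾱ(n) ∉ T, all elements of T have length < n), then every infinite binary tree has an infinite path. -/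
theorem lpp_implies_wkl
    (LPP : ∀ T : Set (List Bool), (∀ a ∈ T, ∀ b, b <+: a → b ∈ T) →
      ∃ α : ℕ → Bool, ∀ n, bar α n ∉ T → ∀ a ∈ T, a.length < n) :
    ∀ T : Set (List Bool), (∀ a ∈ T, ∀ b, b <+: a → b ∈ T) →
      (∀ n, ∃ a ∈ T, a.length = n) →
      ∃ α : ℕ → Bool, ∀ n, bar α n ∈ T := by
  intro T hT hinf
  obtain ⟨α, hα⟩ := LPP T hT
  refine ⟨α, fun n => ?_⟩
  by_contra hn
  obtain ⟨a, haT, rfl⟩ := hinf n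
  exact lt_irrefl _ (hα _ hn a haT)
end
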